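/- Suppose e0 = e1 = e2 = 0, so that C = X0^d + X1^d + X2^d. Then the number of points (x0 : x1 : x2) of the projective plane ℙ²(F_q) with x0^d + x1^d + x2^d = 0 equals 3d; equivalently, the number of nonzero triples (x0, x1, x2) ∈ F_q³ \ {(0,0,0)} with x0^d + x1^d + x2^d = 0 equals 3d(q-1). -/
import Mathlib


open MvPolynomial

set_option linter.unusedSectionVars false

section Aux
variable {F : Type} [Field F] [Fintype F] {d : ℕ}

/-- the two root sets have equal (nat) cardinality -/
lemma cardAB (hd : d ≠ 0) (g : F) (hg : g ^ d = -1) :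
    Nat.card {y : F // y ^ d = 1} = Nat.card {y : F // y ^ d = -1} := by
  have hg0 : g ≠ 0 := by
    intro h; rw [h, zero_pow hd] at hg; exact one_ne_zero (neg_eq_zero.mp hg.symm)
  refine Nat.card_congr ⟨fun a => ⟨g * a.1, by rw [mul_pow, hg, a.2, mul_one]⟩,
    fun b => ⟨g⁻¹ * b.1, by
      rw [mul_pow, inv_pow, hg, b.2]
      norm_num⟩, ?_, ?_⟩ <;> intro x <;> ext <;> field_simp

lemma cardA (hd : Fintype.card F = 2 * d + 1) (hd0 : d ≠ 0) (hF2 : ringChar F ≠ 2) :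
    Nat.card {y : F // y ^ d = 1} = d ∧ Nat.card {y : F // y ^ d = -1} = d := by
  have hdiv : Fintype.card F / 2 = d := by omega
  have dich : ∀ a : F, a ≠ 0 → a ^ d = 1 ∨ a ^ d = -1 := by
    intro a ha
    have := FiniteField.pow_dichotomy hF2 ha
    rwa [hdiv] at this
  obtain ⟨g, hg⟩ := FiniteField.exists_nonsquare hF2
  have hg0 : g ≠ 0 := fun h => hg (h ▸ ⟨0, (mul_zero 0).symm⟩)
  have hgd : g ^ d = -1 := by
    rcases dich g hg0 with h | h
    · exact absurd ((FiniteField.isSquare_iff hF2 hg0).2 (hdiv ▸ h)) hg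
    · exact h
  have hne : (-1 : F) ≠ 1 := Ring.neg_one_ne_one_of_char_ne_two hF2
  have hsum : Nat.card {y : F // y ^ d = 1} + Nat.card {y : F // y ^ d = -1} = 2 * d := by
    have he : ∀ y : F, y ≠ 0 ↔ (y ^ d = 1 ∨ y ^ d = -1) := by
      intro y
      constructor
      · exact dich y
      · rintro (h | h) rfl <;> rw [zero_pow hd0] at h
        · exact zero_ne_one h
        · exact one_ne_zero (neg_eq_zero.mp h.symm)
    classical
    have : Nat.card {y : F // y ≠ 0} = 2 * d := by
      rw [Nat.card_congr (unitsEquivNeZero (G₀ := F)).symm, Nat.card_eq_fintype_card,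
        Fintype.card_units, hd]
      omega
    rw [← this, ← Nat.card_sum]
    refine (Nat.card_congr (Equiv.ofBijective
      (fun s : {y : F // y ^ d = 1} ⊕ {y : F // y ^ d = -1} =>
        (⟨Sum.elim (fun a => a.1) (fun a => a.1) s, by
          rcases s with a | a <;> rw [he] <;> simp [a.2]⟩ : {y : F // y ≠ 0}))
      ⟨?_, ?_⟩))
    · rintro (a | a) (b | b) hab <;> simp only [Subtype.mk.injEq, Sum.elim_inl, Sum.elim_inr] at hab
      · exact congrArg _ (Subtype.ext hab)
      · exact absurd (by rw [← b.2, ← hab]; exact a.2) hne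
      · exact absurd (by rw [← a.2, hab]; exact b.2) hne
      · exact congrArg _ (Subtype.ext hab)
    · rintro ⟨y, hy⟩
      rcases dich y hy with hc | hc
      · exact ⟨Sum.inl ⟨y, hc⟩, rfl⟩
      · exact ⟨Sum.inr ⟨y, hc⟩, rfl⟩
  have heq := cardAB hd0 g hgd
  omega


lemma cardP (hd : Fintype.card F = 2 * d + 1) (hd0 : d ≠ 0) (hF2 : ringChar F ≠ 2) :
    Nat.card {pr : F × F // pr.1 ^ d + pr.2 ^ d = 0 ∧ pr.1 ≠ 0} = 2 * d * d := by
  have hdiv : Fintype.card F / 2 = d := by omega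
  have dich : ∀ a : F, a ≠ 0 → a ^ d = 1 ∨ a ^ d = -1 := by
    intro a ha
    have := FiniteField.pow_dichotomy hF2 ha
    rwa [hdiv] at this
  have hne : (-1 : F) ≠ 1 := Ring.neg_one_ne_one_of_char_ne_two hF2
  have hnz : ∀ a : F, a ^ d = 1 ∨ a ^ d = -1 → a ≠ 0 := by
    rintro a (ha | ha) rfl <;> rw [zero_pow hd0] at ha
    · exact zero_ne_one ha
    · exact one_ne_zero (neg_eq_zero.mp ha.symm)
  have e : ({x : F // x ^ d = 1} × {y : F // y ^ d = -1}) ⊕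
      ({x : F // x ^ d = -1} × {y : F // y ^ d = 1}) ≃
      {pr : F × F // pr.1 ^ d + pr.2 ^ d = 0 ∧ pr.1 ≠ 0} := by
    refine Equiv.ofBijective (fun s => ⟨Sum.elim (fun a => (a.1.1, a.2.1))
      (fun a => (a.1.1, a.2.1)) s, ?_⟩) ⟨?_, ?_⟩
    · rcases s with ⟨x, y⟩ | ⟨x, y⟩
      · exact ⟨by simp [x.2, y.2], hnz _ (Or.inl x.2)⟩
      · exact ⟨by simp [x.2, y.2], hnz _ (Or.inr x.2)⟩
    · rintro (⟨x, y⟩ | ⟨x, y⟩) (⟨x', y'⟩ | ⟨x', y'⟩) hab <;>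
        simp only [Subtype.mk.injEq, Sum.elim_inl, Sum.elim_inr, Prod.mk.injEq] at hab
      · simp only [Sum.inl.injEq, Prod.mk.injEq]
        exact ⟨Subtype.ext hab.1, Subtype.ext hab.2⟩
      · exact absurd (by rw [← x'.2, ← hab.1]; exact x.2) hne
      · exact absurd (by rw [← x.2, hab.1]; exact x'.2) hne
      · simp only [Sum.inr.injEq, Prod.mk.injEq]
        exact ⟨Subtype.ext hab.1, Subtype.ext hab.2⟩
    · rintro ⟨⟨x, y⟩, hsum, hx⟩
      have hy : y ≠ 0 := by
        intro hy0
        rw [hy0, zero_pow hd0, add_zero] at hsum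
        rcases dich x hx with hc | hc <;> rw [hc] at hsum
        · exact zero_ne_one hsum.symm
        · exact absurd (neg_eq_zero.mp hsum ▸ hsum : (-1:F) = 0)
            (fun hh => one_ne_zero (neg_eq_zero.mp hh))
      rcases dich x hx with hc | hc
      · refine ⟨Sum.inl ⟨⟨x, hc⟩, ⟨y, ?_⟩⟩, rfl⟩
        have h2 := hsum; rw [show ((x, y).1 : F) = x from rfl, hc] at h2
        linear_combination h2
      · refine ⟨Sum.inr ⟨⟨x, hc⟩, ⟨y, ?_⟩⟩, rfl⟩
        have h2 := hsum; rw [show ((x, y).1 : F) = x from rfl, hc] at h2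
        linear_combination h2
  rw [← Nat.card_congr e, Nat.card_sum, Nat.card_prod, Nat.card_prod,
    (cardA hd hd0 hF2).1, (cardA hd hd0 hF2).2]
  ring

private lemma fin3_p1_ne (i : Fin 3) : i + 1 ≠ i := by revert i; decide
private lemma fin3_p2_ne (i : Fin 3) : i + 2 ≠ i := by revert i; decide
private lemma fin3_p2_ne_p1 (i : Fin 3) : i + 2 ≠ i + 1 := by revert i; decide
private lemma fin3_cases (i k : Fin 3) : k = i ∨ k = i + 1 ∨ k = i + 2 := by revert i k; decide

/-- auxiliary vector builder -/
def vvec (i : Fin 3) (x y : F) : Fin 3 → F := fun j => if j = i then 0 else if j = i + 1 then x else y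

lemma vvec_self (i : Fin 3) (x y : F) : vvec i x y i = 0 := if_pos rfl
lemma vvec_p1 (i : Fin 3) (x y : F) : vvec i x y (i + 1) = x := by
  simp [vvec, fin3_p1_ne i]
lemma vvec_p2 (i : Fin 3) (x y : F) : vvec i x y (i + 2) = y := by
  simp [vvec, fin3_p2_ne i, fin3_p2_ne_p1 i]

lemma sum_perm (j : Fin 3) (w : Fin 3 → F) :
    w 0 ^ d + w 1 ^ d + w 2 ^ d = w j ^ d + w (j + 1) ^ d + w (j + 2) ^ d := by
  fin_cases j
  · rfl
  · show w 0 ^ d + w 1 ^ d + w 2 ^ d = w 1 ^ d + w 2 ^ d + w 0 ^ d; ring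
  · show w 0 ^ d + w 1 ^ d + w 2 ^ d = w 2 ^ d + w 0 ^ d + w 1 ^ d; ring

lemma cardS (hd : Fintype.card F = 2 * d + 1) (hd0 : d ≠ 0) (hF2 : ringChar F ≠ 2)
    (h3 : (3 : F) ≠ 0) :
    Nat.card {v : Fin 3 → F // v ≠ 0 ∧ v 0 ^ d + v 1 ^ d + v 2 ^ d = 0}
      = 3 * (2 * d * d) := by
  have hdiv : Fintype.card F / 2 = d := by omega
  have dich : ∀ a : F, a ≠ 0 → a ^ d = 1 ∨ a ^ d = -1 := by
    intro a ha
    have := FiniteField.pow_dichotomy hF2 ha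
    rwa [hdiv] at this
  have e : (Fin 3 × {pr : F × F // pr.1 ^ d + pr.2 ^ d = 0 ∧ pr.1 ≠ 0}) ≃
      {v : Fin 3 → F // v ≠ 0 ∧ v 0 ^ d + v 1 ^ d + v 2 ^ d = 0} := by
    refine Equiv.ofBijective (fun s => ⟨vvec s.1 s.2.1.1 s.2.1.2, ?_, ?_⟩) ⟨?_, ?_⟩
    · intro h0
      have h1 : vvec s.1 s.2.1.1 s.2.1.2 (s.1 + 1) = 0 := by rw [h0]; rfl
      rw [vvec_p1] at h1
      exact s.2.2.2 h1
    · rw [sum_perm s.1, vvec_self, vvec_p1, vvec_p2, zero_pow hd0, zero_add]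
      exact s.2.2.1
    · rintro ⟨i, ⟨⟨x, y⟩, hxy, hx⟩⟩ ⟨i', ⟨⟨x', y'⟩, hxy', hx'⟩⟩ heq
      have hfe : ∀ k : Fin 3, vvec i x y k = vvec i' x' y' k :=
        fun k => congrFun (Subtype.ext_iff.mp heq) k
      have hy : y ≠ 0 := by
        intro h0
        rw [h0, zero_pow hd0, add_zero] at hxy
        exact hx (pow_eq_zero_iff hd0 |>.mp hxy)
      have hy' : y' ≠ 0 := by
        intro h0
        rw [h0, zero_pow hd0, add_zero] at hxy'
        exact hx' (pow_eq_zero_iff hd0 |>.mp hxy')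
      have hii : i = i' := by
        rcases fin3_cases i' i with hc | hc | hc
        · exact hc
        · exfalso
          have h0 := hfe i
          rw [vvec_self, hc, vvec_p1] at h0
          exact hx' h0.symm
        · exfalso
          have h0 := hfe i
          rw [vvec_self, hc, vvec_p2] at h0
          exact hy' h0.symm
      subst hii
      have hxx : x = x' := by
        have h0 := hfe (i + 1)
        rwa [vvec_p1, vvec_p1] at h0
      have hyy : y = y' := by
        have h0 := hfe (i + 2)
        rwa [vvec_p2, vvec_p2] at h0
      subst hxx; subst hyy
      rfl
    · rintro ⟨v, hv0, hsum⟩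
      have hz : ∃ j, v j = 0 := by
        by_contra hall
        push_neg at hall
        rcases dich (v 0) (hall 0) with h0 | h0 <;>
          rcases dich (v 1) (hall 1) with h1 | h1 <;>
          rcases dich (v 2) (hall 2) with h2 | h2 <;>
          rw [h0, h1, h2] at hsum <;>
          first
            | exact h3 (by linear_combination hsum)
            | exact h3 (by linear_combination -hsum)
            | exact one_ne_zero (α := F) (by linear_combination hsum)
            | exact one_ne_zero (α := F) (by linear_combination -hsum)
      obtain ⟨j, hj⟩ := hz
      have hsum' : v (j + 1) ^ d + v (j + 2) ^ d = 0 := by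
        have hp := sum_perm (d := d) j v
        rw [hj, zero_pow hd0, zero_add] at hp
        rw [← hp]
        exact hsum
      have hx : v (j + 1) ≠ 0 := by
        intro h0
        have hy0 : v (j + 2) = 0 := by
          rw [h0, zero_pow hd0, zero_add] at hsum'
          exact pow_eq_zero_iff hd0 |>.mp hsum'
        apply hv0
        funext k
        rcases fin3_cases j k with rfl | rfl | rfl <;> simp [hj, h0, hy0]
      refine ⟨⟨j, ⟨(v (j + 1), v (j + 2)), hsum', hx⟩⟩, ?_⟩
      apply Subtype.ext
      show vvec j (v (j + 1)) (v (j + 2)) = v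
      funext k
      rcases fin3_cases j k with rfl | rfl | rfl
      · rw [vvec_self]; exact hj.symm
      · rw [vvec_p1]
      · rw [vvec_p2]
  rw [← Nat.card_congr e, Nat.card_prod, Nat.card_eq_fintype_card (α := Fin 3),
    Fintype.card_fin, cardP hd hd0 hF2]

end Aux

/-- With `e0 = e1 = e2 = 0` (so that `C = X0^d + X1^d + X2^d`), the number of
points of `ℙ²(F_q)` on the curve `C = 0` equals `3d`; equivalently, the number of nonzero
triples `(x0, x1, x2) ∈ F_q³ \ {0}` with `x0^d + x1^d + x2^d = 0` equals `3d(q-1)`. -/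
theorem statement1 (p h : ℕ) (hp : Nat.Prime p) (hp3 : 3 < p) (hh : 0 < h)
    (F : Type) [Field F] [Fintype F] (hcard : Fintype.card F = p ^ h)
    (d : ℕ) (hd : p ^ h = 2 * d + 1) :
    Nat.card {x : Projectivization F (Fin 3 → F) //
        MvPolynomial.eval x.rep
          (X 0 ^ d + X 1 ^ d + X 2 ^ d : MvPolynomial (Fin 3) F) = 0} = 3 * d ∧
    Nat.card {v : Fin 3 → F // v ≠ 0 ∧ v 0 ^ d + v 1 ^ d + v 2 ^ d = 0}
      = 3 * d * (p ^ h - 1) := by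
  classical
  have hq : Fintype.card F = 2 * d + 1 := by rw [hcard, hd]
  have hd0 : d ≠ 0 := by
    have hle : p ≤ p ^ h := Nat.le_self_pow hh.ne' p
    omega
  haveI hcp : CharP F (ringChar F) := ringChar.charP F
  have hrp : (ringChar F).Prime := CharP.char_is_prime F (ringChar F)
  have hpr : ringChar F = p := by
    obtain ⟨n, -, hn⟩ := FiniteField.card F (ringChar F)
    have hdvd : p ∣ ringChar F ^ (n : ℕ) := by
      rw [← hn, hcard]; exact dvd_pow_self p hh.ne'
    exact ((Nat.prime_dvd_prime_iff_eq hp hrp).mp (hp.dvd_of_dvd_pow hdvd)).symm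
  have hF2 : ringChar F ≠ 2 := by rw [hpr]; omega
  haveI hcp' : CharP F p := hpr ▸ ringChar.charP F
  have h3 : (3 : F) ≠ 0 := by
    intro hc
    have hdv := (CharP.cast_eq_zero_iff F p 3).mp hc
    have := Nat.le_of_dvd (by norm_num) hdv
    omega
  have hS := cardS (F := F) hq hd0 hF2 h3
  have hev : ∀ w : Fin 3 → F, MvPolynomial.eval w
      (X 0 ^ d + X 1 ^ d + X 2 ^ d : MvPolynomial (Fin 3) F)
      = w 0 ^ d + w 1 ^ d + w 2 ^ d := by
    intro w
    simp
  have E : {x : Projectivization F (Fin 3 → F) //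
        MvPolynomial.eval x.rep
          (X 0 ^ d + X 1 ^ d + X 2 ^ d : MvPolynomial (Fin 3) F) = 0} × Fˣ ≃
      {v : Fin 3 → F // v ≠ 0 ∧ v 0 ^ d + v 1 ^ d + v 2 ^ d = 0} := by
    refine Equiv.ofBijective (fun s => ⟨(s.2 : F) • s.1.1.rep, ?_, ?_⟩) ⟨?_, ?_⟩
    · exact smul_ne_zero (Units.ne_zero s.2) (Projectivization.rep_nonzero s.1.1)
    · have hx := s.1.2
      rw [hev] at hx
      simp only [Pi.smul_apply, smul_eq_mul]
      linear_combination ((s.2 : F)) ^ d * hx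
    · rintro ⟨⟨x, hx⟩, c⟩ ⟨⟨y, hy⟩, c'⟩ heq
      have hv : (c : F) • x.rep = (c' : F) • y.rep := congrArg Subtype.val heq
      have hxy : x = y := by
        rw [← Projectivization.mk_rep x, ← Projectivization.mk_rep y,
          Projectivization.mk_eq_mk_iff']
        refine ⟨(c : F)⁻¹ * (c' : F), ?_⟩
        rw [mul_smul, ← hv, smul_smul, inv_mul_cancel₀ (Units.ne_zero c), one_smul]
      subst hxy
      obtain ⟨k, hk⟩ := Function.ne_iff.mp (Projectivization.rep_nonzero x)
      have hcc : (c : F) = (c' : F) := by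
        have h2 := congrFun hv k
        simp only [Pi.smul_apply, smul_eq_mul] at h2
        exact mul_right_cancel₀ hk h2
      rw [Units.ext hcc]
    · rintro ⟨v, hv0, hsum⟩
      obtain ⟨a, ha⟩ := Projectivization.exists_smul_eq_mk_rep F v hv0
      have hmem : MvPolynomial.eval (Projectivization.mk F v hv0).rep
          (X 0 ^ d + X 1 ^ d + X 2 ^ d : MvPolynomial (Fin 3) F) = 0 := by
        rw [hev, ← ha]
        simp only [Pi.smul_apply, Units.smul_def, smul_eq_mul]
        linear_combination ((a : F)) ^ d * hsum
      refine ⟨(⟨Projectivization.mk F v hv0, hmem⟩, a⁻¹), ?_⟩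
      apply Subtype.ext
      show ((a⁻¹ : Fˣ) : F) • (Projectivization.mk F v hv0).rep = v
      rw [← ha, Units.smul_def, smul_smul]
      simp
  have hcount := Nat.card_congr E
  rw [Nat.card_prod, hS] at hcount
  have hu : Nat.card Fˣ = 2 * d := by
    rw [Nat.card_eq_fintype_card, Fintype.card_units, hq]
    rfl
  rw [hu] at hcount
  constructor
  · have h2 : Nat.card {x : Projectivization F (Fin 3 → F) //
        MvPolynomial.eval x.rep
          (X 0 ^ d + X 1 ^ d + X 2 ^ d : MvPolynomial (Fin 3) F) = 0} * (2 * d)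
        = 3 * d * (2 * d) := by rw [hcount]; ring
    exact Nat.eq_of_mul_eq_mul_right (Nat.mul_pos (by norm_num) (Nat.pos_of_ne_zero hd0)) h2
  · rw [hS, hd, Nat.add_sub_cancel]
    ring
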